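/- For any density matrices ρ₀, ρ₁ on ℂ^n and any positive semidefinite matrices M₀, M₁ with M₀ + M₁ = I, the (real, nonnegative) success probability satisfies (1/2)·Tr(M₀ρ₀) + (1/2)·Tr(M₁ρ₁) ≤ (1/2)(1 + Δ(ρ₀,ρ₁)). In particular, if Δ(ρ₀,ρ₁) ≤ ε then no two-outcome measurement identifies a uniformly random one of the two states with probability exceeding (1/2)(1 + ε). -/

import Mathlib

open Matrix Kronecker ComplexOrder

/-- The positive semidefinite square root, as `Matrix.PosSemidef.sqrt` was defined in older Mathlib. -/
noncomputable def PosSemidef.oldSqrt {n : Type*} [Fintype n] [DecidableEq n] {A : Matrix n n ℂ}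
    (hA : A.PosSemidef) : Matrix n n ℂ :=
  hA.1.eigenvectorUnitary.1 * diagonal ((↑) ∘ (√·) ∘ hA.1.eigenvalues) *
    (star hA.1.eigenvectorUnitary : Matrix n n ℂ)

/-- The trace norm `‖A‖₁ = Tr √(Aᴴ A)` of a complex matrix. -/
noncomputable def traceNorm {n : Type*} [Fintype n] [DecidableEq n] (A : Matrix n n ℂ) : ℝ :=
  ((PosSemidef.oldSqrt (Matrix.posSemidef_conjTranspose_mul_self A)).trace).re

/-- The trace distance `Δ(ρ,σ) = ‖ρ - σ‖₁ / 2`. -/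
noncomputable def traceDist {n : Type*} [Fintype n] [DecidableEq n] (ρ σ : Matrix n n ℂ) : ℝ :=
  traceNorm (ρ - σ) / 2

open scoped Classical in
/-- Positive semidefinite square root (junk value `0` on non-PSD matrices). -/
noncomputable def psdSqrt {n : Type*} [Fintype n] [DecidableEq n] (A : Matrix n n ℂ) :
    Matrix n n ℂ :=
  if h : A.PosSemidef then PosSemidef.oldSqrt h else 0

/-- The fidelity `F(ρ,σ) = ‖√ρ √σ‖₁`. -/
noncomputable def fidelity {n : Type*} [Fintype n] [DecidableEq n] (ρ σ : Matrix n n ℂ) : ℝ :=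
  traceNorm (psdSqrt ρ * psdSqrt σ)

/-- A density matrix: positive semidefinite with trace 1. -/
def IsDensityMatrix {n : Type*} [Fintype n] [DecidableEq n] (ρ : Matrix n n ℂ) : Prop :=
  ρ.PosSemidef ∧ ρ.trace = 1

/-- The projector `|b⟩⟨b|` on ℂ². -/
noncomputable def proj (b : Bool) : Matrix Bool Bool ℂ := Matrix.single b b 1

/-- The strong oblivious transfer channel `F_{(x₀,x₁)}`. -/
noncomputable def sotChannel (x₀ x₁ : Bool) (ρ : Matrix (Bool × Bool) (Bool × Bool) ℂ) :
    Matrix (Bool × Bool) (Bool × Bool) ℂ :=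
  ∑ i : Bool, ∑ i' : Bool,
    ρ (i, i') (i, i') •
      (((1/2 : ℂ) • (1 : Matrix Bool Bool ℂ)) ⊗ₖ proj (xor (bif xor i i' then x₁ else x₀) i'))

/-! Writing `M₁ = 1 - M₀`, the success probability is `(1 + Re Tr(M₀ Δ)) / 2` with
`Δ = ρ₀ - ρ₁` Hermitian and traceless. In an eigenbasis of `Δ`, `Re Tr(M₀ Δ) = ∑ tᵢ λᵢ` where the
`tᵢ` are diagonal entries of the conjugated `M₀`, hence lie in `[0, 1]` because `0 ≤ M₀ ≤ 1`. So
`Re Tr(M₀ Δ)` is at most the sum of the positive eigenvalues, `(∑ |λᵢ| + ∑ λᵢ) / 2 = ‖Δ‖₁ / 2`. -/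

variable {m : Type*} [Fintype m] [DecidableEq m]

lemma Matrix.trace_conjStarAlgAut (U : unitary (Matrix m m ℂ)) (X : Matrix m m ℂ) :
    (Unitary.conjStarAlgAut ℂ _ U X).trace = X.trace := by
  rw [Unitary.conjStarAlgAut_apply, trace_mul_cycle, Unitary.coe_star_mul_self, one_mul]

open scoped MatrixOrder in
lemma PosSemidef.oldSqrt_eq_cfcSqrt {A : Matrix m m ℂ} (hA : A.PosSemidef) :
    PosSemidef.oldSqrt hA = CFC.sqrt A := by
  rw [CFC.sqrt_eq_cfc, cfc_nnreal_eq_real _ _ hA.nonneg, hA.1.cfc_eq]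
  simp only [PosSemidef.oldSqrt, IsHermitian.cfc, Unitary.conjStarAlgAut_apply]
  congr 3
  funext i
  simp [Real.coe_sqrt, hA.eigenvalues_nonneg i]

lemma Matrix.IsHermitian.traceNorm_eq_sum_abs_eigenvalues {A : Matrix m m ℂ}
    (hA : A.IsHermitian) : traceNorm A = ∑ i, |hA.eigenvalues i| := by
  open scoped MatrixOrder in
  have habs : PosSemidef.oldSqrt (posSemidef_conjTranspose_mul_self A) = hA.cfc (‖·‖) := by
    rw [PosSemidef.oldSqrt_eq_cfcSqrt, ← star_eq_conjTranspose, ← CFC.abs,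
      CFC.abs_eq_cfc_norm A hA.isSelfAdjoint, hA.cfc_eq]
  rw [traceNorm, habs, IsHermitian.cfc, trace_conjStarAlgAut, trace_diagonal,
    Complex.re_sum]
  simp

lemma mul_le_half_abs_add {t x : ℝ} (ht₀ : 0 ≤ t) (ht₁ : t ≤ 1) : t * x ≤ (|x| + x) / 2 := by
  rcases le_or_gt 0 x with hx | hx
  · rw [abs_of_nonneg hx]; nlinarith
  · rw [abs_of_neg hx]; nlinarith

lemma Matrix.IsHermitian.re_trace_mul_le {A M : Matrix m m ℂ} (hA : A.IsHermitian)
    (hM : M.PosSemidef) (hM' : (1 - M).PosSemidef) :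
    (M * A).trace.re ≤ (traceNorm A + A.trace.re) / 2 := by
  set U : Matrix m m ℂ := hA.eigenvectorUnitary.1
  set N : Matrix m m ℂ := Uᴴ * M * U
  have hUU : Uᴴ * U = 1 := Unitary.coe_star_mul_self hA.eigenvectorUnitary
  have hN : N.PosSemidef := hM.conjTranspose_mul_mul_same U
  have hN' : (1 - N).PosSemidef := by
    convert hM'.conjTranspose_mul_mul_same U using 1
    rw [Matrix.mul_sub, Matrix.sub_mul, Matrix.mul_one, hUU]
  have htr : (M * A).trace = ∑ i, N i i * hA.eigenvalues i := by
    conv_lhs => rw [hA.spectral_theorem, Unitary.conjStarAlgAut_apply]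
    rw [← Matrix.mul_assoc, ← Matrix.mul_assoc, trace_mul_comm, ← Matrix.mul_assoc,
      ← Matrix.mul_assoc]
    simp [N, U, trace, Matrix.mul_diagonal, star_eq_conjTranspose]
  have hNdiag (i : m) : 0 ≤ (N i i).re ∧ (N i i).re ≤ 1 := by
    have h₀ := (Complex.nonneg_iff.mp (hN.diag_nonneg (i := i))).1
    have h₁ := (Complex.nonneg_iff.mp (hN'.diag_nonneg (i := i))).1
    simp only [sub_apply, one_apply_eq, Complex.sub_re, Complex.one_re] at h₁
    exact ⟨h₀, by linarith⟩
  calc (M * A).trace.re = ∑ i, (N i i).re * hA.eigenvalues i := by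
        simp [htr, Complex.re_sum]
    _ ≤ ∑ i, (|hA.eigenvalues i| + hA.eigenvalues i) / 2 :=
        Finset.sum_le_sum fun i _ => mul_le_half_abs_add (hNdiag i).1 (hNdiag i).2
    _ = (traceNorm A + A.trace.re) / 2 := by
        rw [hA.traceNorm_eq_sum_abs_eigenvalues, hA.trace_eq_sum_eigenvalues, Complex.re_sum,
          ← Finset.sum_div, Finset.sum_add_distrib]
        simp

/-- Holevo–Helstrom, optimality direction. -/
theorem stmt_3 {n : ℕ} (ρ₀ ρ₁ : Matrix (Fin n) (Fin n) ℂ)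
    (h₀ : IsDensityMatrix ρ₀) (h₁ : IsDensityMatrix ρ₁)
    (M₀ M₁ : Matrix (Fin n) (Fin n) ℂ)
    (hM₀ : M₀.PosSemidef) (hM₁ : M₁.PosSemidef) (hsum : M₀ + M₁ = 1) :
    (1/2 : ℝ) * ((M₀ * ρ₀).trace).re + (1/2 : ℝ) * ((M₁ * ρ₁).trace).re ≤
      (1/2 : ℝ) * (1 + traceDist ρ₀ ρ₁) := by
  obtain rfl : M₁ = 1 - M₀ := eq_sub_of_add_eq' hsum
  have hsuccess : (M₀ * ρ₀).trace.re + ((1 - M₀) * ρ₁).trace.re =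
      1 + (M₀ * (ρ₀ - ρ₁)).trace.re := by
    rw [Matrix.sub_mul, Matrix.one_mul, Matrix.mul_sub, trace_sub, trace_sub, h₁.2]
    simp only [Complex.sub_re, Complex.one_re]
    ring
  have htraceless : (ρ₀ - ρ₁).trace = 0 := by rw [trace_sub, h₀.2, h₁.2, sub_self]
  have hbound := (h₀.1.1.sub h₁.1.1).re_trace_mul_le hM₀ hM₁
  rw [htraceless, Complex.zero_re, add_zero] at hbound
  rw [traceDist]
  linarith
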